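/- arXiv:2604.15863 — 3 statements merged into one kernel-verified Lean document; each statement's English description precedes it below -/
import Mathlib

section
/- Let γ ∈ (0,2), κ = 2γ(γ+1)/(2+γ)², a₋ = −γ/(2+γ), δ ∈ (0,1), and let Ω ⊂ ℝⁿ be a C^{1,δ} graph domain in B₂ with regularized distance d (as in the context, with k = 1). Let v be continuous on the closure of Ω ∩ B₁, twice continuously differentiable in Ω ∩ B₁, and satisfy −Δv + κ v/d² ≤ 0 in Ω ∩ B₁ together with limsup_{x→∂Ω} v(x)/d(x)^{a₋} ≤ 0. Then there exists ρ ∈ (0,1) such that for every r ∈ (0,ρ): if v ≤ 0 on Ω ∩ ∂B_r, then v ≤ 0 in Ω ∩ B_r. -/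
noncomputable section
open Metric Set Filter
open scoped Topology RealInnerProductSpace Classical

/-- The Euclidean Laplacian of `u : ℝⁿ → ℝ`. -/
def lap {m : ℕ} (u : EuclideanSpace ℝ (Fin m) → ℝ) (x : EuclideanSpace ℝ (Fin m)) : ℝ :=
  ∑ i, fderiv ℝ (fun y => fderiv ℝ u y (EuclideanSpace.single i 1)) x (EuclideanSpace.single i 1)

/-- Projection to the first `n` coordinates. -/
def proj {n : ℕ} (x : EuclideanSpace ℝ (Fin (n + 1))) : EuclideanSpace ℝ (Fin n) :=
  WithLp.toLp 2 (fun i : Fin n => x i.castSucc)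

/-- Evaluation of a polynomial in `n+1` variables at a point of ℝ^{n+1}. -/
def peval {m : ℕ} (Q : MvPolynomial (Fin m) ℝ) (x : EuclideanSpace ℝ (Fin m)) : ℝ :=
  MvPolynomial.eval (fun i => x i) Q

/-- `Ω` is a `C^{k,δ}` graph domain in `B₂` with graph function `φ` (with `φ(0) = 0`,
`∇φ(0) = 0`). -/
def IsGraphDomain {n : ℕ} (k : ℕ) (δ : ℝ) (Ω : Set (EuclideanSpace ℝ (Fin (n + 1))))
    (φ : EuclideanSpace ℝ (Fin n) → ℝ) : Prop :=
  IsOpen Ω ∧ ContDiff ℝ k φ ∧ φ 0 = 0 ∧ fderiv ℝ φ 0 = 0 ∧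
  (∃ C : ℝ, ∀ x y : EuclideanSpace ℝ (Fin n),
    ‖iteratedFDeriv ℝ k φ x - iteratedFDeriv ℝ k φ y‖ ≤ C * ‖x - y‖ ^ δ) ∧
  Ω ∩ ball 0 2 = {x | φ (proj x) < x (Fin.last n)} ∩ ball 0 2

/-- The `C^{k,δ}` norm of the graph function is at most 1. -/
def GraphNormLE1 {n : ℕ} (k : ℕ) (δ : ℝ) (φ : EuclideanSpace ℝ (Fin n) → ℝ) : Prop :=
  (∀ m ≤ k, ∀ x, ‖iteratedFDeriv ℝ m φ x‖ ≤ 1) ∧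
  ∀ x y, ‖iteratedFDeriv ℝ k φ x - iteratedFDeriv ℝ k φ y‖ ≤ ‖x - y‖ ^ δ

/-- `f` is of class `C^{j,δ}` up to the boundary on `U`: it agrees on `U` with a globally `C^j`
function whose `j`-th derivative is `δ`-Hölder on the closure of `U`. -/
def ExtendsCkdelta {m : ℕ} (j : ℕ) (δ : ℝ) (f : EuclideanSpace ℝ (Fin m) → ℝ)
    (U : Set (EuclideanSpace ℝ (Fin m))) : Prop :=
  ∃ F : EuclideanSpace ℝ (Fin m) → ℝ, ContDiff ℝ j F ∧ EqOn F f U ∧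
    ∃ C : ℝ, ∀ x ∈ closure U, ∀ y ∈ closure U,
      ‖iteratedFDeriv ℝ j F x - iteratedFDeriv ℝ j F y‖ ≤ C * ‖x - y‖ ^ δ

/-- Properties (i) and (ii) of a regularized distance `d` for `Ω` (Lemma 2.3). -/
def IsRegDistBasic {n : ℕ} (k : ℕ) (δ C₀ : ℝ) (Ω : Set (EuclideanSpace ℝ (Fin (n + 1))))
    (d : EuclideanSpace ℝ (Fin (n + 1)) → ℝ) : Prop :=
  ContDiffOn ℝ (⊤ : ℕ∞) d (Ω ∩ ball 0 1) ∧
  ExtendsCkdelta k δ d (Ω ∩ ball 0 1) ∧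
  (∀ x ∈ Ω ∩ ball 0 1,
    C₀⁻¹ * infDist x (frontier Ω) ≤ d x ∧ d x ≤ C₀ * infDist x (frontier Ω)) ∧
  ∃ (Q : MvPolynomial (Fin (n + 1)) ℝ) (g : EuclideanSpace ℝ (Fin (n + 1)) → ℝ),
    Q.totalDegree ≤ ⌊(k : ℝ) + δ⌋₊ ∧
    (∀ mo : Fin (n + 1) →₀ ℕ, (mo.sum fun _ e => e) ≤ 1 → MvPolynomial.coeff mo Q = 0) ∧
    (∀ x ∈ ball (0 : EuclideanSpace ℝ (Fin (n + 1))) 1, |peval Q x| ≤ C₀) ∧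
    ContDiffOn ℝ (⊤ : ℕ∞) g (Ω ∩ ball 0 1) ∧
    (∀ x ∈ Ω ∩ ball 0 1, ‖fderiv ℝ g x‖ ≤ C₀ * ‖x‖ ^ ((k : ℝ) - 1 + δ)) ∧
    ∀ x ∈ Ω ∩ ball 0 1, d x = x (Fin.last n) + peval Q x + g x

/-- Property (iii) of a regularized distance: the action of the Laplacian on powers of `d`. -/
def RegDistLap {n : ℕ} (k : ℕ) (δ C₀ : ℝ) (Ω : Set (EuclideanSpace ℝ (Fin (n + 1))))
    (d : EuclideanSpace ℝ (Fin (n + 1)) → ℝ) : Prop :=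
  (k = 1 → ∀ lam : ℝ, ∀ x ∈ Ω ∩ ball 0 1,
    |lap (fun y => d y ^ lam) x - lam * (lam - 1) * d x ^ (lam - 2)|
      ≤ C₀ * d x ^ (δ + lam - 2)) ∧
  (2 ≤ k → ∀ lam : ℝ, ∃ h : EuclideanSpace ℝ (Fin (n + 1)) → ℝ,
    ContDiffOn ℝ (⊤ : ℕ∞) h (Ω ∩ ball 0 1) ∧ ExtendsCkdelta (k - 2) δ h (Ω ∩ ball 0 1) ∧
    ∀ x ∈ Ω ∩ ball 0 1,
      lap (fun y => d y ^ lam) x - lam * (lam - 1) * d x ^ (lam - 2) = d x ^ (lam - 1) * h x)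

/-- A regularized distance for `Ω` (Lemma 2.3). -/
def IsRegDist {n : ℕ} (k : ℕ) (δ C₀ : ℝ) (Ω : Set (EuclideanSpace ℝ (Fin (n + 1))))
    (d : EuclideanSpace ℝ (Fin (n + 1)) → ℝ) : Prop :=
  IsRegDistBasic k δ C₀ Ω d ∧ RegDistLap k δ C₀ Ω d

/-!
Put `a = a₋ / 2`. Since `a₋ < 0`, `a (a - 1) < a₋ (a₋ - 1) = κ`, so by property (iii) the barrier
`w = d ^ a` is a strict supersolution, `Δw < κ w / d²`, wherever `C₀ d ^ δ < κ - a (a - 1)`, which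
holds in `Ω ∩ B_ρ` for small `ρ` because `d ≤ C₀ |x|`. As `a < 0`, `w` blows up at `∂Ω`, while `v`
is bounded. Hence if `v - ε w` were positive somewhere in `Ω ∩ B_r`, it would attain a positive
maximum at an interior point (it is `≤ 0` on `∂B_r` and near `∂Ω`), where
`Δv ≤ ε Δw < ε κ w / d² < κ v / d² ≤ Δv`. So `v ≤ ε w` for every `ε > 0`, and `v ≤ 0`.
-/

theorem IsLocalMax.deriv_deriv_nonpos {F : ℝ → ℝ} {t₀ : ℝ} (hmax : IsLocalMax F t₀)
    (hF : ContinuousAt F t₀) : deriv (deriv F) t₀ ≤ 0 := by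
  by_contra! hpos
  have hmin : IsLocalMin F t₀ := isLocalMin_of_deriv_deriv_pos hpos hmax.deriv_eq_zero hF
  have hconst : F =ᶠ[𝓝 t₀] fun _ => F t₀ := by
    filter_upwards [hmax, hmin] with t h₁ h₂ using le_antisymm h₁ h₂
  have : deriv F =ᶠ[𝓝 t₀] fun _ => 0 := by simpa using hconst.deriv
  simp [this.deriv_eq] at hpos

section SecondDirectionalDerivative

variable {E : Type*} [NormedAddCommGroup E] [NormedSpace ℝ E] {f g : E → ℝ} {x : E}

theorem ContDiffAt.differentiableAt_fderiv_apply (hf : ContDiffAt ℝ 2 f x) (e : E) :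
    DifferentiableAt ℝ (fun y => fderiv ℝ f y e) x :=
  ((hf.fderiv_right (m := 1) (by norm_num)).differentiableAt one_ne_zero).clm_apply
    (differentiableAt_const e)

theorem ContDiffAt.eventually_differentiableAt (hf : ContDiffAt ℝ 2 f x) :
    ∀ᶠ y in 𝓝 x, DifferentiableAt ℝ f y :=
  (hf.eventually (by simp)).mono fun _ hy => hy.differentiableAt (by norm_num)

theorem ContDiffAt.deriv_deriv_comp_line (hf : ContDiffAt ℝ 2 f x) (e : E) :
    deriv (deriv fun t : ℝ => f (x + t • e)) 0 = fderiv ℝ (fun y => fderiv ℝ f y e) x e := by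
  have hline : ∀ t : ℝ, HasDerivAt (fun s : ℝ => x + s • e) e t := fun t => by
    simpa using ((hasDerivAt_id t).smul_const e).const_add x
  have hcont : Tendsto (fun t : ℝ => x + t • e) (𝓝 0) (𝓝 x) := by
    simpa using (hline 0).continuousAt.tendsto
  have hderiv : (deriv fun t : ℝ => f (x + t • e)) =ᶠ[𝓝 0] fun t => fderiv ℝ f (x + t • e) e := by
    filter_upwards [hcont.eventually hf.eventually_differentiableAt] with t ht
    exact (ht.hasFDerivAt.comp_hasDerivAt t (hline t)).deriv
  rw [hderiv.deriv_eq]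
  exact ((hf.differentiableAt_fderiv_apply e).hasFDerivAt.comp_hasDerivAt_of_eq 0 (hline 0)
    (by simp)).deriv

theorem ContDiffAt.fderiv_fderiv_apply_nonpos_of_isLocalMax (hf : ContDiffAt ℝ 2 f x)
    (hmax : IsLocalMax f x) (e : E) : fderiv ℝ (fun y => fderiv ℝ f y e) x e ≤ 0 := by
  have hline : ContinuousAt (fun t : ℝ => x + t • e) 0 := by fun_prop
  have hx : x + (0 : ℝ) • e = x := by simp
  rw [← hf.deriv_deriv_comp_line e]
  refine IsLocalMax.deriv_deriv_nonpos ?_ ?_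
  · exact IsLocalMax.comp_continuous (f := f) (by rwa [hx]) hline
  · exact ContinuousAt.comp (f := fun t : ℝ => x + t • e) (by rw [hx]; exact hf.continuousAt) hline

theorem ContDiffAt.fderiv_fderiv_sub_const_mul (hf : ContDiffAt ℝ 2 f x)
    (hg : ContDiffAt ℝ 2 g x) (ε : ℝ) (e : E) :
    fderiv ℝ (fun y => fderiv ℝ (fun z => f z - ε * g z) y e) x e =
      fderiv ℝ (fun y => fderiv ℝ f y e) x e - ε * fderiv ℝ (fun y => fderiv ℝ g y e) x e := by
  have hfg : (fun y => fderiv ℝ (fun z => f z - ε * g z) y e) =ᶠ[𝓝 x]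
      fun y => fderiv ℝ f y e - ε * fderiv ℝ g y e := by
    filter_upwards [hf.eventually_differentiableAt, hg.eventually_differentiableAt]
      with y hfy hgy
    rw [fderiv_fun_sub hfy (hgy.const_mul ε), fderiv_const_mul hgy]
    simp
  rw [hfg.fderiv_eq, fderiv_fun_sub (hf.differentiableAt_fderiv_apply e)
    ((hg.differentiableAt_fderiv_apply e).const_mul ε),
    fderiv_const_mul (hg.differentiableAt_fderiv_apply e)]
  simp

end SecondDirectionalDerivative

section Laplacian

variable {m : ℕ} {f g : EuclideanSpace ℝ (Fin m) → ℝ} {x : EuclideanSpace ℝ (Fin m)}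

theorem lap_sub_const_mul (hf : ContDiffAt ℝ 2 f x) (hg : ContDiffAt ℝ 2 g x) (ε : ℝ) :
    lap (fun y => f y - ε * g y) x = lap f x - ε * lap g x := by
  simp only [lap, hf.fderiv_fderiv_sub_const_mul hg, Finset.sum_sub_distrib, Finset.mul_sum]

theorem lap_nonpos_of_isLocalMax (hf : ContDiffAt ℝ 2 f x) (hmax : IsLocalMax f x) :
    lap f x ≤ 0 :=
  Finset.sum_nonpos fun _ _ => hf.fderiv_fderiv_apply_nonpos_of_isLocalMax hmax _

theorem le_const_mul_of_isLocalMax_sub {c ε : ℝ} (hf : ContDiffAt ℝ 2 f x)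
    (hg : ContDiffAt ℝ 2 g x) (hc : 0 < c) (hε : 0 < ε) (hfsub : c * f x ≤ lap f x)
    (hgsup : lap g x < c * g x) (hmax : IsLocalMax (fun y => f y - ε * g y) x) :
    f x ≤ ε * g x := by
  have hlap : lap f x ≤ ε * lap g x := by
    have := lap_nonpos_of_isLocalMax (hf.sub (contDiffAt_const.mul hg)) hmax
    rw [lap_sub_const_mul hf hg] at this
    linarith
  by_contra! hlt
  have : c * (ε * g x) < c * f x := mul_lt_mul_of_pos_left hlt hc
  nlinarith [mul_lt_mul_of_pos_left hgsup hε]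

end Laplacian

theorem exists_isLocalMax_of_pos {X : Type*} [TopologicalSpace X] {K D : Set X} {u : X → ℝ}
    (hK : IsCompact K) (hD : IsOpen D) (hu : ContinuousOn u K)
    (hpos : ∀ y ∈ D, 0 < u y → y ∈ K) (hout : ∀ y ∈ K \ D, u y ≤ 0) {x₀ : X} (hx₀ : x₀ ∈ D)
    (h0 : 0 < u x₀) : ∃ y ∈ D, 0 < u y ∧ IsLocalMax u y := by
  obtain ⟨y, hyK, hmax⟩ := hK.exists_isMaxOn ⟨x₀, hpos x₀ hx₀ h0⟩ hu
  have hy : 0 < u y := h0.trans_le (hmax (hpos x₀ hx₀ h0))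
  have hyD : y ∈ D := by
    by_contra hyD
    exact (hout y ⟨hyK, hyD⟩).not_gt hy
  refine ⟨y, hyD, hy, Filter.mem_of_superset (hD.mem_nhds hyD) fun z hz => ?_⟩
  by_cases hz0 : 0 < u z
  · exact hmax (hpos z hz hz0)
  · exact (not_lt.1 hz0).trans hy.le

theorem nonpos_of_forall_pos_le_mul {a b : ℝ} (h : ∀ ε > 0, a ≤ ε * b) : a ≤ 0 := by
  rcases le_or_gt b 0 with hb | hb
  · exact (h 1 one_pos).trans (by linarith)
  · refine le_of_forall_pos_le_add fun η hη => ?_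
    simpa [div_mul_cancel₀ η hb.ne'] using h (η / b) (div_pos hη hb)

section Barrier

variable {m : ℕ} {Ω : Set (EuclideanSpace ℝ (Fin m))} {c v w : EuclideanSpace ℝ (Fin m) → ℝ}
  {r ε : ℝ}

theorem le_const_mul_of_subsolution (hΩ : IsOpen Ω) (hε : 0 < ε)
    (hv : ContinuousOn v (closure (Ω ∩ ball 0 r))) (hv₂ : ContDiffOn ℝ 2 v (Ω ∩ ball 0 r))
    (hw : ContinuousOn w (Ω ∩ closedBall 0 r)) (hw₂ : ContDiffOn ℝ 2 w (Ω ∩ ball 0 r))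
    (hw_nonneg : ∀ y ∈ Ω ∩ sphere 0 r, 0 ≤ w y)
    (hw_blowup : ∀ M, ∃ t > 0, ∀ y ∈ Ω ∩ ball 0 r, infDist y (frontier Ω) < t → M ≤ w y)
    (hc : ∀ y ∈ Ω ∩ ball 0 r, 0 < c y) (hsub : ∀ y ∈ Ω ∩ ball 0 r, c y * v y ≤ lap v y)
    (hsup : ∀ y ∈ Ω ∩ ball 0 r, lap w y < c y * w y) (hbd : ∀ y ∈ Ω ∩ sphere 0 r, v y ≤ 0) :
    ∀ x ∈ Ω ∩ ball 0 r, v x ≤ ε * w x := by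
  set D := Ω ∩ ball (0 : EuclideanSpace ℝ (Fin m)) r
  have hD : IsOpen D := hΩ.inter isOpen_ball
  have hDc : IsCompact (closure D) := (isBounded_ball.subset inter_subset_right).isCompact_closure
  obtain ⟨V, hV⟩ := hDc.bddAbove_image hv
  obtain ⟨t, ht, hblow⟩ := hw_blowup (V / ε)
  set K := closure D ∩ {y | t ≤ infDist y (frontier Ω)}
  have hKΩ : K ⊆ Ω ∩ closedBall 0 r := by
    rintro y ⟨hyD, hyt⟩
    have hyF : y ∉ frontier Ω := fun h => by
      simp only [mem_ofPred_eq, infDist_zero_of_mem h] at hyt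
      linarith
    refine ⟨?_, closure_ball_subset_closedBall (closure_mono inter_subset_right hyD)⟩
    rw [← hΩ.interior_eq]
    simpa [hyF] using
      (closure_eq_interior_union_frontier Ω).subset (closure_mono inter_subset_left hyD)
  have hpos : ∀ y ∈ D, 0 < v y - ε * w y → y ∈ K := fun y hyD hy => by
    refine ⟨subset_closure hyD, show t ≤ _ from not_lt.1 fun hyt => ?_⟩
    have hvV : v y ≤ V := hV (mem_image_of_mem v (subset_closure hyD))
    have hwV : V ≤ ε * w y := by simpa [div_le_iff₀' hε] using hblow y hyD hyt
    linarith
  have hout : ∀ y ∈ K \ D, v y - ε * w y ≤ 0 := by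
    rintro y ⟨hyK, hyD⟩
    obtain ⟨hyΩ, hyr⟩ := hKΩ hyK
    have hyS : y ∈ Ω ∩ sphere 0 r :=
      ⟨hyΩ, le_antisymm (mem_closedBall.1 hyr) (not_lt.1 fun h => hyD ⟨hyΩ, h⟩)⟩
    nlinarith [hw_nonneg y hyS, hbd y hyS]
  intro x hx
  by_contra! hlt
  obtain ⟨y, hyD, hy, hmax⟩ := exists_isLocalMax_of_pos (u := fun y => v y - ε * w y)
    (hDc.inter_right (isClosed_le continuous_const (continuous_infDist_pt _))) hD
    ((hv.mono inter_subset_left).sub (continuousOn_const.mul (hw.mono hKΩ))) hpos hout hx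
    (sub_pos.2 hlt)
  have hy_nhds : D ∈ 𝓝 y := hD.mem_nhds hyD
  exact (sub_pos.1 hy).not_ge <| le_const_mul_of_isLocalMax_sub
    (hv₂.contDiffAt hy_nhds) (hw₂.contDiffAt hy_nhds) (hc y hyD) hε (hsub y hyD) (hsup y hyD) hmax

end Barrier

theorem exists_pos_forall_mul_rpow_lt (C : ℝ) {δ η : ℝ} (hδ : 0 < δ) (hη : 0 < η) :
    ∃ t > 0, ∀ s ∈ Ioo 0 t, C * s ^ δ < η := by
  have h : Tendsto (fun s : ℝ => C * s ^ δ) (𝓝[>] 0) (𝓝 0) := by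
    have := ((Real.continuousAt_rpow_const 0 δ (Or.inr hδ.le)).const_mul C).tendsto
    simpa [Real.zero_rpow hδ.ne'] using this.mono_left nhdsWithin_le_nhds
  exact (nhdsGT_basis 0).eventually_iff.1 (h.eventually (eventually_lt_nhds hη))

theorem exists_pos_forall_le_rpow {a : ℝ} (ha : a < 0) (M : ℝ) :
    ∃ t > 0, ∀ s ∈ Ioo 0 t, M ≤ s ^ a :=
  (nhdsGT_basis 0).eventually_iff.1 ((tendsto_rpow_neg_nhdsGT_zero ha).eventually_ge_atTop M)

theorem IsGraphDomain.zero_mem_frontier {n k : ℕ} {δ : ℝ}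
    {Ω : Set (EuclideanSpace ℝ (Fin (n + 1)))} {φ : EuclideanSpace ℝ (Fin n) → ℝ}
    (hΩ : IsGraphDomain k δ Ω φ) : (0 : EuclideanSpace ℝ (Fin (n + 1))) ∈ frontier Ω := by
  obtain ⟨hΩo, -, hφ0, -, -, hgraph⟩ := hΩ
  have hline : ∀ t : ℝ, |t| < 2 → (EuclideanSpace.single (Fin.last n) t ∈ Ω ↔ 0 < t) := by
    intro t ht
    have hproj : proj (EuclideanSpace.single (Fin.last n) t) = 0 := by ext; simp [proj]
    simpa [hproj, hφ0, ht] using Set.ext_iff.1 hgraph (EuclideanSpace.single (Fin.last n) t)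
  have h0 : EuclideanSpace.single (Fin.last n) (0 : ℝ) = 0 := (PiLp.single_eq_zero_iff 2 _).2 rfl
  rw [hΩo.frontier_eq]
  refine ⟨Metric.mem_closure_iff.2 fun ε hε => ?_, by simpa [h0] using hline 0⟩
  have ht : |min ε 1 / 2| = min ε 1 / 2 := abs_of_pos (by positivity)
  refine ⟨_, (hline _ ?_).2 (by positivity : 0 < min ε 1 / 2), ?_⟩
  · rw [ht]; linarith [min_le_right ε 1]
  · rw [dist_zero_left, PiLp.norm_single, Real.norm_eq_abs, ht]; linarith [min_le_left ε 1]

section RegularizedDistance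

variable {n k : ℕ} {δ C₀ : ℝ} {Ω : Set (EuclideanSpace ℝ (Fin (n + 1)))}
  {d : EuclideanSpace ℝ (Fin (n + 1)) → ℝ}

theorem IsRegDistBasic.pos (hd : IsRegDistBasic k δ C₀ Ω d) (hΩ : IsOpen Ω)
    (hF : (frontier Ω).Nonempty) (hC₀ : 0 < C₀) : ∀ y ∈ Ω ∩ ball 0 1, 0 < d y := by
  intro y hy
  have hyF : y ∉ frontier Ω := by simp [hΩ.frontier_eq, hy.1]
  have := (isClosed_frontier.notMem_iff_infDist_pos hF).1 hyF
  exact lt_of_lt_of_le (by positivity) (hd.2.2.1 y hy).1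

theorem IsRegDistBasic.le_mul_norm (hd : IsRegDistBasic k δ C₀ Ω d) (hC₀ : 0 ≤ C₀)
    (h0 : 0 ∈ frontier Ω) : ∀ y ∈ Ω ∩ ball 0 1, d y ≤ C₀ * ‖y‖ := fun y hy =>
  (hd.2.2.1 y hy).2.trans (mul_le_mul_of_nonneg_left (by simpa using infDist_le_dist_of_mem h0) hC₀)

theorem IsRegDistBasic.exists_forall_mul_rpow_lt (hd : IsRegDistBasic k δ C₀ Ω d)
    (hC₀ : 0 < C₀) (h0 : 0 ∈ frontier Ω) (hpos : ∀ y ∈ Ω ∩ ball 0 1, 0 < d y) (hδ : 0 < δ)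
    {η : ℝ} (hη : 0 < η) : ∃ ρ ∈ Ioo (0 : ℝ) 1, ∀ y ∈ Ω ∩ ball 0 ρ, C₀ * d y ^ δ < η := by
  obtain ⟨t, ht, h⟩ := exists_pos_forall_mul_rpow_lt C₀ hδ hη
  have hρ : min (1 / 2) (t / C₀) < 1 := by linarith [min_le_left (1 / 2 : ℝ) (t / C₀)]
  refine ⟨min (1 / 2) (t / C₀), ⟨by positivity, hρ⟩, fun y hy => h _ ⟨hpos y ?_, ?_⟩⟩
  · exact ⟨hy.1, ball_subset_ball hρ.le hy.2⟩
  calc d y ≤ C₀ * ‖y‖ := hd.le_mul_norm hC₀.le h0 y ⟨hy.1, ball_subset_ball hρ.le hy.2⟩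
    _ < C₀ * (t / C₀) := by
      gcongr; exact (mem_ball_zero_iff.1 hy.2).trans_le (min_le_right _ _)
    _ = t := mul_div_cancel₀ _ hC₀.ne'

theorem IsRegDistBasic.contDiffOn_rpow (hd : IsRegDistBasic k δ C₀ Ω d)
    (hpos : ∀ y ∈ Ω ∩ ball 0 1, 0 < d y) (a : ℝ) :
    ContDiffOn ℝ 2 (fun y => d y ^ a) (Ω ∩ ball 0 1) :=
  (hd.1.of_le (WithTop.coe_le_coe.2 le_top)).rpow_const_of_ne fun y hy => (hpos y hy).ne'

theorem IsRegDistBasic.exists_le_rpow (hd : IsRegDistBasic k δ C₀ Ω d) (hC₀ : 0 < C₀)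
    (hpos : ∀ y ∈ Ω ∩ ball 0 1, 0 < d y) {a : ℝ} (ha : a < 0) (M : ℝ) :
    ∃ t > 0, ∀ y ∈ Ω ∩ ball 0 1, infDist y (frontier Ω) < t → M ≤ d y ^ a := by
  obtain ⟨t, ht, h⟩ := exists_pos_forall_le_rpow ha M
  refine ⟨t / C₀, div_pos ht hC₀, fun y hy hyt => h _ ⟨hpos y hy, ?_⟩⟩
  calc d y ≤ C₀ * infDist y (frontier Ω) := (hd.2.2.1 y hy).2
    _ < C₀ * (t / C₀) := by gcongr
    _ = t := mul_div_cancel₀ _ hC₀.ne'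

theorem RegDistLap.lap_rpow_lt (hd : RegDistLap 1 δ C₀ Ω d) {y : EuclideanSpace ℝ (Fin (n + 1))}
    (hy : y ∈ Ω ∩ ball 0 1) (hpos : 0 < d y) {a κ : ℝ} (hgap : a * (a - 1) + C₀ * d y ^ δ < κ) :
    lap (fun z => d z ^ a) y < κ / d y ^ 2 * d y ^ a := by
  have hlap := (abs_le.1 (hd.1 rfl a y hy)).2
  have hδa : d y ^ (δ + a - 2) = d y ^ δ * d y ^ (a - 2) := by
    rw [← Real.rpow_add hpos]; ring_nf
  have ha : κ / d y ^ 2 * d y ^ a = κ * d y ^ (a - 2) := by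
    rw [Real.rpow_sub hpos, Real.rpow_two]; ring
  have : 0 < d y ^ (a - 2) := Real.rpow_pos_of_pos hpos _
  rw [hδa] at hlap
  rw [ha]
  nlinarith [mul_lt_mul_of_pos_right hgap this]

end RegularizedDistance

theorem statement6_general {n : ℕ} (γ δ κ aM : ℝ) (hγ : γ ∈ Ioo (0:ℝ) 2) (hδ : δ ∈ Ioo (0:ℝ) 1)
    (hκ : κ = 2 * γ * (γ + 1) / (2 + γ) ^ 2) (haM : aM = -(γ / (2 + γ)))
    (Ω : Set (EuclideanSpace ℝ (Fin (n + 1)))) (φ : EuclideanSpace ℝ (Fin n) → ℝ)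
    (d : EuclideanSpace ℝ (Fin (n + 1)) → ℝ) (C₀ : ℝ) (hC₀ : 1 ≤ C₀)
    (hΩ : IsGraphDomain 1 δ Ω φ) (hd : IsRegDist 1 δ C₀ Ω d)
    (v : EuclideanSpace ℝ (Fin (n + 1)) → ℝ)
    (hvcont : ContinuousOn v (closure (Ω ∩ ball 0 1)))
    (hvC2 : ContDiffOn ℝ 2 v (Ω ∩ ball 0 1))
    (hsub : ∀ x ∈ Ω ∩ ball 0 1, -lap v x + κ * v x / d x ^ 2 ≤ 0) :
    ∃ ρ ∈ Ioo (0:ℝ) 1, ∀ r ∈ Ioo (0:ℝ) ρ,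
      (∀ x ∈ Ω ∩ sphere (0 : EuclideanSpace ℝ (Fin (n + 1))) r, v x ≤ 0) →
      ∀ x ∈ Ω ∩ ball (0 : EuclideanSpace ℝ (Fin (n + 1))) r, v x ≤ 0 := by
  have h0 := hΩ.zero_mem_frontier
  have hC₀' : 0 < C₀ := by linarith
  have hd_pos := hd.1.pos hΩ.1 ⟨0, h0⟩ hC₀'
  have haM_neg : aM < 0 := by rw [haM]; linarith [div_pos hγ.1 (by linarith [hγ.1] : 0 < 2 + γ)]
  have hκ' : κ = aM * (aM - 1) := by
    rw [hκ, haM]; field_simp [(by linarith [hγ.1] : 2 + γ ≠ 0)]; ring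
  have hκ_pos : 0 < κ := by rw [hκ']; nlinarith
  set a := aM / 2 with ha
  have ha_neg : a < 0 := by linarith
  have hgap : 0 < κ - a * (a - 1) := by rw [hκ', ha]; nlinarith
  obtain ⟨ρ, hρ, hsmall⟩ := hd.1.exists_forall_mul_rpow_lt hC₀' h0 hd_pos hδ.1 hgap
  refine ⟨ρ, hρ, fun r hr hbd x hx => ?_⟩
  have hD : Ω ∩ closedBall 0 r ⊆ Ω ∩ ball 0 1 :=
    inter_subset_inter_right _ (closedBall_subset_ball (hr.2.trans hρ.2))
  have hD' : Ω ∩ ball 0 r ⊆ Ω ∩ ball 0 1 :=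
    (inter_subset_inter_right _ ball_subset_closedBall).trans hD
  have hw := hd.1.contDiffOn_rpow hd_pos a
  refine nonpos_of_forall_pos_le_mul fun ε hε =>
    le_const_mul_of_subsolution (c := fun y => κ / d y ^ 2) hΩ.1 hε
      (hvcont.mono (closure_mono hD')) (hvC2.mono hD') (hw.continuousOn.mono hD) (hw.mono hD')
      (fun y hy => (Real.rpow_pos_of_pos (hd_pos y (hD (inter_subset_inter_right _
        sphere_subset_closedBall hy))) _).le)
      (fun M => (hd.1.exists_le_rpow hC₀' hd_pos ha_neg M).imp
        fun _ h => ⟨h.1, fun y hy => h.2 y (hD' hy)⟩)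
      (fun y hy => div_pos hκ_pos (pow_pos (hd_pos y (hD' hy)) 2))
      (fun y hy => by linarith [hsub y (hD' hy), div_mul_eq_mul_div κ (d y ^ 2) (v y)])
      (fun y hy => hd.2.lap_rpow_lt (hD' hy) (hd_pos y (hD' hy))
        (by linarith [hsmall y ⟨hy.1, ball_subset_ball hr.2.le hy.2⟩]))
      hbd x hx

/-- Lemma 3.3: comparison principle for `L_κ = -Δ + κ/d²` in a `C^{1,δ}` graph
domain, for subsolutions `v` with `limsup_{x→∂Ω} v/d^{a₋} ≤ 0`. -/
theorem statement6 {n : ℕ} (γ δ κ aM : ℝ) (hγ : γ ∈ Ioo (0:ℝ) 2) (hδ : δ ∈ Ioo (0:ℝ) 1)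
    (hκ : κ = 2 * γ * (γ + 1) / (2 + γ) ^ 2) (haM : aM = -(γ / (2 + γ)))
    (Ω : Set (EuclideanSpace ℝ (Fin (n + 1)))) (φ : EuclideanSpace ℝ (Fin n) → ℝ)
    (d : EuclideanSpace ℝ (Fin (n + 1)) → ℝ) (C₀ : ℝ) (hC₀ : 1 ≤ C₀)
    (hΩ : IsGraphDomain 1 δ Ω φ) (hd : IsRegDist 1 δ C₀ Ω d)
    (v : EuclideanSpace ℝ (Fin (n + 1)) → ℝ)
    (hvcont : ContinuousOn v (closure (Ω ∩ ball 0 1)))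
    (hvC2 : ContDiffOn ℝ 2 v (Ω ∩ ball 0 1))
    (hsub : ∀ x ∈ Ω ∩ ball 0 1, -lap v x + κ * v x / d x ^ 2 ≤ 0)
    (hlimsup : ∀ x₀ ∈ frontier Ω ∩ ball (0 : EuclideanSpace ℝ (Fin (n + 1))) 1,
      limsup (fun x => v x / d x ^ aM) (𝓝[Ω ∩ ball 0 1] x₀) ≤ 0) :
    ∃ ρ ∈ Ioo (0:ℝ) 1, ∀ r ∈ Ioo (0:ℝ) ρ,
      (∀ x ∈ Ω ∩ sphere (0 : EuclideanSpace ℝ (Fin (n + 1))) r, v x ≤ 0) →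
      ∀ x ∈ Ω ∩ ball (0 : EuclideanSpace ℝ (Fin (n + 1))) r, v x ≤ 0 :=
  statement6_general γ δ κ aM hγ hδ hκ haM Ω φ d C₀ hC₀ hΩ hd v hvcont hvC2 hsub
end
end

section
/- Let n ∈ ℕ, δ ∈ (0,1), ε > 0, C₀ > 0, M > 1 and r₀ ∈ (0,1/2) with M·r₀² < 1 and M < r₀^{δ−1}. Let w : B₁ → ℝ and let (ν_k)_{k≥0} be unit vectors in ℝⁿ such that for every integer k ≥ 0: |w(x) − (x·ν_k)⁺| ≤ C₀·ε·(Mr₀²)^k for all x ∈ B_{r₀^k}, and |ν_k − ν_{k+1}| ≤ C₀·ε·(Mr₀²)^k. Then the sequence (ν_k) converges to a unit vector ν₀, with |ν_k − ν₀| ≤ C₀·ε·(Mr₀²)^k/(1−Mr₀²) for every k, and there exists a constant C depending only on C₀, M and r₀ such that |w(x) − (x·ν₀)⁺| ≤ C·ε·r^{1+δ} for every r ∈ (0,1/2) and every x ∈ B_r. -/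
noncomputable section
open Metric Set Filter
open scoped Topology RealInnerProductSpace

/-- dyadic iteration of improvement of flatness. If `w` is `C₀ ε (M r₀²)^k`-close
to `(x·ν_k)⁺` in `B_{r₀^k}` and the unit directions `ν_k` move by at most `C₀ ε (M r₀²)^k`, then
the `ν_k` converge geometrically to a unit direction `ν₀`, and `|w - (x·ν₀)⁺| ≤ C ε r^{1+δ}` in
`B_r` for all `r ∈ (0,1/2)`, with `C` depending only on `C₀, M, r₀`. -/
theorem statement17 (C₀ M r₀ : ℝ) (hC₀ : 0 < C₀) (hM : 1 < M)
    (hr₀ : r₀ ∈ Ioo (0:ℝ) (1 / 2)) (hMr : M * r₀ ^ 2 < 1) :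
    ∃ C > 0, ∀ (n : ℕ) (δ ε : ℝ), δ ∈ Ioo (0:ℝ) 1 → 0 < ε → M < r₀ ^ (δ - 1) →
      ∀ (w : EuclideanSpace ℝ (Fin n) → ℝ) (ν : ℕ → EuclideanSpace ℝ (Fin n)),
        (∀ k, ‖ν k‖ = 1) →
        (∀ k : ℕ, ∀ x ∈ ball (0 : EuclideanSpace ℝ (Fin n)) (r₀ ^ k),
          |w x - max ⟪x, ν k⟫ 0| ≤ C₀ * ε * (M * r₀ ^ 2) ^ k) →
        (∀ k : ℕ, ‖ν k - ν (k + 1)‖ ≤ C₀ * ε * (M * r₀ ^ 2) ^ k) →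
        ∃ ν₀ : EuclideanSpace ℝ (Fin n), ‖ν₀‖ = 1 ∧ Tendsto ν atTop (𝓝 ν₀) ∧
          (∀ k : ℕ, ‖ν k - ν₀‖ ≤ C₀ * ε * (M * r₀ ^ 2) ^ k / (1 - M * r₀ ^ 2)) ∧
          ∀ r ∈ Ioo (0:ℝ) (1 / 2), ∀ x ∈ ball (0 : EuclideanSpace ℝ (Fin n)) r,
            |w x - max ⟪x, ν₀⟫ 0| ≤ C * ε * r ^ (1 + δ) := by
  obtain ⟨hr₀0, hr₀1⟩ := hr₀
  have hr₀lt1 : r₀ < 1 := by linarith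
  set q : ℝ := M * r₀ ^ 2 with hqdef
  have hq0 : 0 < q := by positivity
  have hq1 : q < 1 := hMr
  have h1q : 0 < 1 - q := by linarith
  have h1qinv : 0 < 1 / (1 - q) := by positivity
  have hK : 0 < 1 + 1 / (1 - q) := by linarith
  refine ⟨C₀ * (1 + 1 / (1 - q)) / r₀ ^ 2,
    div_pos (mul_pos hC₀ hK) (by positivity), ?_⟩
  intro n δ ε hδ hε hMδ w ν hν hw hνd
  have hCε : 0 < C₀ * ε := mul_pos hC₀ hε
  have hd : ∀ k, dist (ν k) (ν (k + 1)) ≤ (C₀ * ε) * q ^ k := by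
    intro k
    rw [dist_eq_norm]
    simpa [mul_assoc] using hνd k
  have hc : CauchySeq ν := cauchySeq_of_le_geometric q (C₀ * ε) hq1 hd
  obtain ⟨ν₀, hlim⟩ := cauchySeq_tendsto_of_complete hc
  have htail : ∀ k : ℕ, ‖ν k - ν₀‖ ≤ C₀ * ε * q ^ k / (1 - q) := by
    intro k
    have := dist_le_of_le_geometric_of_tendsto q (C₀ * ε) hq1 hd hlim k
    rw [dist_eq_norm] at this
    simpa [mul_assoc] using this
  have hn1 : ‖ν₀‖ = 1 := by
    refine tendsto_nhds_unique hlim.norm ?_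
    simpa [hν] using (tendsto_const_nhds : Tendsto (fun _ : ℕ => (1:ℝ)) atTop (𝓝 1))
  refine ⟨ν₀, hn1, hlim, htail, ?_⟩
  intro r hr x hx
  obtain ⟨hr0, hr1⟩ := hr
  -- find the least m with r₀ ^ m ≤ r
  have hP : ∃ m : ℕ, r₀ ^ m ≤ r := by
    obtain ⟨m, hm⟩ := exists_pow_lt_of_lt_one hr0 hr₀lt1
    exact ⟨m, hm.le⟩
  classical
  set m₀ := Nat.find hP with hm₀
  have hm₀spec : r₀ ^ m₀ ≤ r := Nat.find_spec hP
  have hm₀pos : 0 < m₀ := by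
    rcases Nat.eq_zero_or_pos m₀ with h | h
    · exfalso; rw [h] at hm₀spec; simp at hm₀spec; linarith
    · exact h
  set k : ℕ := m₀ - 1 with hk
  have hkm : k + 1 = m₀ := Nat.succ_pred_eq_of_pos hm₀pos
  have hupper : r₀ ^ (k + 1) ≤ r := by rw [hkm]; exact hm₀spec
  have hlower : r < r₀ ^ k := by
    have := Nat.find_min hP (m := k) (by omega)
    linarith [not_le.mp this]
  have hxk : x ∈ ball (0 : EuclideanSpace ℝ (Fin n)) (r₀ ^ k) := by
    rw [mem_ball_zero_iff] at hx ⊢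
    linarith
  have hxnorm : ‖x‖ ≤ r₀ ^ k := by
    rw [mem_ball_zero_iff] at hx; linarith
  have h1 : |w x - max ⟪x, ν k⟫ 0| ≤ C₀ * ε * q ^ k := hw k x hxk
  have h2 : |max ⟪x, ν k⟫ 0 - max ⟪x, ν₀⟫ 0| ≤ r₀ ^ k * (C₀ * ε * q ^ k / (1 - q)) := by
    calc |max ⟪x, ν k⟫ 0 - max ⟪x, ν₀⟫ 0| ≤ |⟪x, ν k⟫ - ⟪x, ν₀⟫| :=
          abs_max_sub_max_le_abs _ _ _
      _ = |⟪x, ν k - ν₀⟫| := by rw [inner_sub_right]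
      _ ≤ ‖x‖ * ‖ν k - ν₀‖ := abs_real_inner_le_norm _ _
      _ ≤ r₀ ^ k * (C₀ * ε * q ^ k / (1 - q)) :=
          mul_le_mul hxnorm (htail k) (norm_nonneg _) (by positivity)
  have hmain : |w x - max ⟪x, ν₀⟫ 0| ≤ C₀ * ε * (1 + 1 / (1 - q)) * q ^ k := by
    have h3 : |w x - max ⟪x, ν₀⟫ 0| ≤ |w x - max ⟪x, ν k⟫ 0| + |max ⟪x, ν k⟫ 0 - max ⟪x, ν₀⟫ 0| := by
      have := abs_sub_le (w x) (max ⟪x, ν k⟫ 0) (max ⟪x, ν₀⟫ 0)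
      linarith
    have hr₀k1 : r₀ ^ k ≤ 1 := pow_le_one₀ hr₀0.le hr₀lt1.le
    have h4 : r₀ ^ k * (C₀ * ε * q ^ k / (1 - q)) ≤ C₀ * ε * q ^ k / (1 - q) := by
      nlinarith [pow_pos hq0 k, div_pos (mul_pos hCε (pow_pos hq0 k)) h1q]
    have : C₀ * ε * q ^ k + C₀ * ε * q ^ k / (1 - q) = C₀ * ε * (1 + 1 / (1 - q)) * q ^ k := by
      field_simp
    linarith
  -- now estimate q ^ k ≤ r ^ (1 + δ) / r₀ ^ 2
  have hδ0 : 0 < δ := hδ.1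
  have hδ1 : δ < 1 := hδ.2
  have hqlt : q < r₀ ^ ((δ : ℝ) + 1) := by
    have h2' : (r₀ : ℝ) ^ (2 : ℕ) = r₀ ^ ((2 : ℝ)) := by
      rw [← Real.rpow_natCast r₀ 2]; norm_num
    calc q = M * r₀ ^ 2 := rfl
      _ < r₀ ^ (δ - 1) * r₀ ^ 2 := by
          exact mul_lt_mul_of_pos_right hMδ (by positivity)
      _ = r₀ ^ (δ - 1) * r₀ ^ ((2 : ℝ)) := by rw [h2']
      _ = r₀ ^ (δ + 1) := by
          rw [← Real.rpow_add hr₀0]; ring_nf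
  have hqk : q ^ k ≤ (r₀ ^ k : ℝ) ^ ((δ : ℝ) + 1) := by
    calc q ^ k ≤ (r₀ ^ ((δ : ℝ) + 1)) ^ k :=
          pow_le_pow_left₀ hq0.le hqlt.le k
      _ = (r₀ ^ k : ℝ) ^ ((δ : ℝ) + 1) := by
          rw [← Real.rpow_natCast (r₀ ^ ((δ : ℝ) + 1)) k, ← Real.rpow_mul hr₀0.le,
            mul_comm, Real.rpow_mul hr₀0.le, Real.rpow_natCast]
  have hrk : (r₀ : ℝ) ^ k ≤ r / r₀ := by
    rw [le_div_iff₀ hr₀0]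
    calc r₀ ^ k * r₀ = r₀ ^ (k + 1) := by ring
      _ ≤ r := hupper
  have hstep : (r₀ ^ k : ℝ) ^ ((δ : ℝ) + 1) ≤ (r / r₀) ^ ((δ : ℝ) + 1) :=
    Real.rpow_le_rpow (by positivity) hrk (by linarith)
  have hsplit : (r / r₀ : ℝ) ^ ((δ : ℝ) + 1) = r ^ ((δ : ℝ) + 1) / r₀ ^ ((δ : ℝ) + 1) :=
    Real.div_rpow hr0.le hr₀0.le _
  have hrinv : (r₀ : ℝ) ^ ((δ : ℝ) + 1) ≥ r₀ ^ (2 : ℝ) :=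
    Real.rpow_le_rpow_of_exponent_ge hr₀0 hr₀lt1.le (by linarith)
  have hr₀2 : (r₀ : ℝ) ^ (2 : ℝ) = r₀ ^ (2 : ℕ) := by
    rw [← Real.rpow_natCast r₀ 2]; norm_num
  have hqkfin : q ^ k ≤ r ^ ((1 : ℝ) + δ) / r₀ ^ 2 := by
    have hpos1 : (0:ℝ) < r₀ ^ ((δ : ℝ) + 1) := Real.rpow_pos_of_pos hr₀0 _
    have hnum : (0:ℝ) ≤ r ^ ((δ : ℝ) + 1) := (Real.rpow_pos_of_pos hr0 _).le
    have hdd : r ^ ((δ : ℝ) + 1) / r₀ ^ ((δ : ℝ) + 1) ≤ r ^ ((δ : ℝ) + 1) / r₀ ^ (2 : ℕ) := by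
      rw [← hr₀2]
      exact div_le_div_of_nonneg_left hnum (by positivity) hrinv
    have : q ^ k ≤ r ^ ((δ : ℝ) + 1) / r₀ ^ 2 := by
      calc q ^ k ≤ (r₀ ^ k : ℝ) ^ ((δ : ℝ) + 1) := hqk
        _ ≤ (r / r₀) ^ ((δ : ℝ) + 1) := hstep
        _ = r ^ ((δ : ℝ) + 1) / r₀ ^ ((δ : ℝ) + 1) := hsplit
        _ ≤ r ^ ((δ : ℝ) + 1) / r₀ ^ 2 := hdd
    rwa [add_comm] at this
  calc |w x - max ⟪x, ν₀⟫ 0| ≤ C₀ * ε * (1 + 1 / (1 - q)) * q ^ k := hmain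
    _ ≤ C₀ * ε * (1 + 1 / (1 - q)) * (r ^ ((1 : ℝ) + δ) / r₀ ^ 2) := by
        exact mul_le_mul_of_nonneg_left hqkfin (by positivity)
    _ = C₀ * (1 + 1 / (1 - q)) / r₀ ^ 2 * ε * r ^ ((1 : ℝ) + δ) := by ring
end
end

section
/- Let s ∈ (−1,0), C₀ > 0, and let h : (0,1] → ℝ be continuous with |h(t)| ≤ C₀ for all t ∈ (0,1]. If y : (0,1] → ℝ is twice continuously differentiable and satisfies y''(t) + (s/t)·y'(t) = h(t) for all t ∈ (0,1], then there exist constants c₁, c₂ ∈ ℝ and a function f : (0,1] → ℝ with |f(t)| ≤ C·C₀·t² for all t ∈ (0,1] (where C depends only on s) such that y(t) = c₁·t^{1−s} + c₂ + f(t) on (0,1]. -/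
/-!
Multiplying by the integrating factor `t ^ s` turns the equation into `(t ^ s y')' = t ^ s h`.
Since `s > -1`, the weight `v ^ s` is integrable at `0`, so `t ^ s y' = A + G t` with
`G t = ∫₀ᵗ v ^ s h v`, and `|G t| ≤ C₀ t ^ (s + 1) / (s + 1)`. Dividing by `t ^ s` and integrating
once more gives `y = c₁ t ^ (1 - s) + c₂ + F`, where `F t = ∫₀ᵗ u ^ (-s) G u` inherits the bound
`|F t| ≤ C₀ t ^ 2 / (2 (s + 1))` from `|u ^ (-s) G u| ≤ C₀ u / (s + 1)`.
-/

noncomputable section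
open Metric Set Filter
open scoped Topology

open MeasureTheory

section RpowBound

variable {f : ℝ → ℝ} {a M t : ℝ}

theorem intervalIntegrable_of_abs_le_mul_rpow (ha : -1 < a) (ht : 0 ≤ t)
    (hf : ContinuousOn f (Ioc 0 t)) (hbound : ∀ v ∈ Ioc 0 t, |f v| ≤ M * v ^ a) :
    IntervalIntegrable f volume 0 t := by
  refine ((intervalIntegral.intervalIntegrable_rpow' ha).const_mul M).mono_fun' ?_ ?_ <;>
    rw [uIoc_of_le ht]
  · exact hf.aestronglyMeasurable measurableSet_Ioc
  · filter_upwards [ae_restrict_mem measurableSet_Ioc] with v hv using hbound v hv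

theorem abs_integral_le_of_abs_le_mul_rpow (ha : -1 < a) (ht : 0 ≤ t)
    (hbound : ∀ v ∈ Ioc 0 t, |f v| ≤ M * v ^ a) :
    |∫ v in 0..t, f v| ≤ M / (a + 1) * t ^ (a + 1) :=
  calc |∫ v in 0..t, f v|
      ≤ ∫ v in 0..t, M * v ^ a :=
        intervalIntegral.norm_integral_le_of_norm_le (f := f) ht (ae_of_all _ hbound)
          ((intervalIntegral.intervalIntegrable_rpow' ha).const_mul M)
    _ = M / (a + 1) * t ^ (a + 1) := by
        rw [intervalIntegral.integral_const_mul, integral_rpow (Or.inl ha),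
          Real.zero_rpow (by linarith : 0 < a + 1).ne']
        ring

end RpowBound

theorem exists_eq_const_add_integral_of_hasDerivAt {Φ φ : ℝ → ℝ} {a b : ℝ}
    (hΦ : ContinuousOn Φ (Ioc a b)) (hderiv : ∀ x ∈ Ioo a b, HasDerivAt Φ (φ x) x)
    (hφ : IntervalIntegrable φ volume a b) :
    ∃ c, ∀ t ∈ Ioc a b, Φ t = c + ∫ x in a..t, φ x := by
  refine ⟨Φ b - ∫ x in a..b, φ x, fun t ht => ?_⟩
  have ht' : t ∈ uIcc a b := Icc_subset_uIcc (Ioc_subset_Icc_self ht)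
  have hright := hφ.mono_set (uIcc_subset_uIcc_right ht')
  have hftc : ∫ x in t..b, φ x = Φ b - Φ t :=
    intervalIntegral.integral_eq_sub_of_hasDerivAt_of_le ht.2
      (hΦ.mono fun x hx => ⟨ht.1.trans_le hx.1, hx.2⟩)
      (fun x hx => hderiv x ⟨ht.1.trans hx.1, hx.2⟩) hright
  have hsplit := intervalIntegral.integral_add_adjacent_intervals
    (hφ.mono_set (uIcc_subset_uIcc_left ht')) hright
  linarith

section WeightedPrimitive

variable {s C₀ : ℝ} {h : ℝ → ℝ}

def weightedPrimitive (s : ℝ) (h : ℝ → ℝ) (t : ℝ) : ℝ := ∫ v in 0..t, v ^ s * h v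

def particularSolution (s : ℝ) (h : ℝ → ℝ) (t : ℝ) : ℝ :=
  ∫ u in 0..t, u ^ (-s) * weightedPrimitive s h u

theorem abs_rpow_mul_le (hbound : ∀ t ∈ Ioc (0:ℝ) 1, |h t| ≤ C₀) {v : ℝ} (hv : v ∈ Ioc (0:ℝ) 1) :
    |v ^ s * h v| ≤ C₀ * v ^ s := by
  rw [abs_mul, abs_of_nonneg (Real.rpow_nonneg hv.1.le s), mul_comm]
  exact mul_le_mul_of_nonneg_right (hbound v hv) (Real.rpow_nonneg hv.1.le s)

theorem intervalIntegrable_rpow_mul (hs : -1 < s) (hcont : ContinuousOn h (Ioc 0 1))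
    (hbound : ∀ t ∈ Ioc (0:ℝ) 1, |h t| ≤ C₀) :
    IntervalIntegrable (fun v => v ^ s * h v) volume 0 1 :=
  intervalIntegrable_of_abs_le_mul_rpow hs zero_le_one
    ((continuousOn_id.rpow_const fun _ hv => Or.inl hv.1.ne').mul hcont)
    fun _ hv => abs_rpow_mul_le hbound hv

theorem abs_weightedPrimitive_le (hs : -1 < s) (hbound : ∀ t ∈ Ioc (0:ℝ) 1, |h t| ≤ C₀)
    {t : ℝ} (ht : t ∈ Ioc (0:ℝ) 1) :
    |weightedPrimitive s h t| ≤ C₀ / (s + 1) * t ^ (s + 1) :=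
  abs_integral_le_of_abs_le_mul_rpow hs ht.1.le
    fun _ hv => abs_rpow_mul_le hbound ⟨hv.1, hv.2.trans ht.2⟩

theorem continuousOn_weightedPrimitive (hs : -1 < s) (hcont : ContinuousOn h (Ioc 0 1))
    (hbound : ∀ t ∈ Ioc (0:ℝ) 1, |h t| ≤ C₀) :
    ContinuousOn (weightedPrimitive s h) (Icc 0 1) := by
  have := intervalIntegral.continuousOn_primitive_interval'
    (intervalIntegrable_rpow_mul hs hcont hbound) left_mem_uIcc
  rwa [uIcc_of_le zero_le_one] at this

theorem abs_rpow_neg_mul_weightedPrimitive_le (hs : -1 < s)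
    (hbound : ∀ t ∈ Ioc (0:ℝ) 1, |h t| ≤ C₀) {u : ℝ} (hu : u ∈ Ioc (0:ℝ) 1) :
    |u ^ (-s) * weightedPrimitive s h u| ≤ C₀ / (s + 1) * u ^ (1:ℝ) := by
  have hpos : 0 ≤ u ^ (-s) := Real.rpow_nonneg hu.1.le _
  calc |u ^ (-s) * weightedPrimitive s h u|
      ≤ u ^ (-s) * (C₀ / (s + 1) * u ^ (s + 1)) := by
        rw [abs_mul, abs_of_nonneg hpos]
        exact mul_le_mul_of_nonneg_left (abs_weightedPrimitive_le hs hbound hu) hpos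
    _ = C₀ / (s + 1) * u ^ (1:ℝ) := by
        rw [mul_left_comm, ← Real.rpow_add hu.1, neg_add_cancel_left]

theorem intervalIntegrable_rpow_neg_mul_weightedPrimitive (hs : -1 < s)
    (hcont : ContinuousOn h (Ioc 0 1)) (hbound : ∀ t ∈ Ioc (0:ℝ) 1, |h t| ≤ C₀) :
    IntervalIntegrable (fun u => u ^ (-s) * weightedPrimitive s h u) volume 0 1 :=
  intervalIntegrable_of_abs_le_mul_rpow (by norm_num) zero_le_one
    ((continuousOn_id.rpow_const fun _ hu => Or.inl hu.1.ne').mul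
      ((continuousOn_weightedPrimitive hs hcont hbound).mono Ioc_subset_Icc_self))
    fun _ hu => abs_rpow_neg_mul_weightedPrimitive_le hs hbound hu

theorem abs_particularSolution_le (hs : -1 < s) (hbound : ∀ t ∈ Ioc (0:ℝ) 1, |h t| ≤ C₀)
    {t : ℝ} (ht : t ∈ Ioc (0:ℝ) 1) :
    |particularSolution s h t| ≤ 1 / (2 * (s + 1)) * C₀ * t ^ 2 := by
  calc |particularSolution s h t|
      ≤ C₀ / (s + 1) / (1 + 1) * t ^ ((1:ℝ) + 1) :=
        abs_integral_le_of_abs_le_mul_rpow (by norm_num) ht.1.le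
          fun _ hu => abs_rpow_neg_mul_weightedPrimitive_le hs hbound ⟨hu.1, hu.2.trans ht.2⟩
    _ = 1 / (2 * (s + 1)) * C₀ * t ^ 2 := by
        have : s + 1 ≠ 0 := (neg_lt_iff_pos_add.mp hs).ne'
        rw [one_add_one_eq_two, Real.rpow_two]
        field_simp

theorem hasDerivAt_rpow_mul_of_hasDerivAt {s x : ℝ} {y' y'' : ℝ → ℝ} (hx : 0 < x)
    (hy' : HasDerivAt y' (y'' x) x) :
    HasDerivAt (fun u => u ^ s * y' u) (x ^ s * (y'' x + s / x * y' x)) x := by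
  refine ((Real.hasDerivAt_rpow_const (p := s) (Or.inl hx.ne')).mul hy').congr_deriv ?_
  rw [Real.rpow_sub hx, Real.rpow_one]
  field_simp
  ring

theorem exists_eq_rpow_neg_mul_of_ode {y' y'' : ℝ → ℝ} (hs : -1 < s)
    (hcont : ContinuousOn h (Ioc 0 1)) (hbound : ∀ t ∈ Ioc (0:ℝ) 1, |h t| ≤ C₀)
    (hy' : ∀ t ∈ Ioc (0:ℝ) 1, HasDerivWithinAt y' (y'' t) (Ioc (0:ℝ) 1) t)
    (hode : ∀ t ∈ Ioc (0:ℝ) 1, y'' t + (s / t) * y' t = h t) :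
    ∃ A, ∀ t ∈ Ioc (0:ℝ) 1, y' t = A * t ^ (-s) + t ^ (-s) * weightedPrimitive s h t := by
  obtain ⟨A, hA⟩ := exists_eq_const_add_integral_of_hasDerivAt (Φ := fun t => t ^ s * y' t)
    ((continuousOn_id.rpow_const fun _ ht => Or.inl ht.1.ne').mul
      fun t ht => (hy' t ht).continuousWithinAt)
    (fun x hx => hode x (Ioo_subset_Ioc_self hx) ▸ hasDerivAt_rpow_mul_of_hasDerivAt hx.1
      ((hy' x (Ioo_subset_Ioc_self hx)).hasDerivAt (Ioc_mem_nhds hx.1 hx.2)))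
    (intervalIntegrable_rpow_mul hs hcont hbound)
  refine ⟨A, fun t ht => ?_⟩
  have hAt : t ^ s * y' t = A + weightedPrimitive s h t := hA t ht
  rw [Real.rpow_neg ht.1.le, mul_comm A, ← mul_add, ← hAt,
    inv_mul_cancel_left₀ (Real.rpow_pos_of_pos ht.1 s).ne']

theorem exists_eq_rpow_add_particularSolution {y : ℝ → ℝ} {A : ℝ} (hs : -1 < s) (hs' : s < 1)
    (hcont : ContinuousOn h (Ioc 0 1)) (hbound : ∀ t ∈ Ioc (0:ℝ) 1, |h t| ≤ C₀)
    (hy : ∀ t ∈ Ioc (0:ℝ) 1, HasDerivWithinAt y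
      (A * t ^ (-s) + t ^ (-s) * weightedPrimitive s h t) (Ioc (0:ℝ) 1) t) :
    ∃ c, ∀ t ∈ Ioc (0:ℝ) 1, y t = A / (1 - s) * t ^ (1 - s) + c + particularSolution s h t := by
  have hprim := intervalIntegrable_rpow_neg_mul_weightedPrimitive hs hcont hbound
  have hpow (b : ℝ) : IntervalIntegrable (fun x => A * x ^ (-s)) volume 0 b :=
    (intervalIntegral.intervalIntegrable_rpow' (by linarith)).const_mul A
  obtain ⟨c, hc⟩ := exists_eq_const_add_integral_of_hasDerivAt
    (fun t ht => (hy t ht).continuousWithinAt)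
    (fun x hx => (hy x (Ioo_subset_Ioc_self hx)).hasDerivAt (Ioc_mem_nhds hx.1 hx.2))
    ((hpow 1).add hprim)
  refine ⟨c, fun t ht => ?_⟩
  have ht' : t ∈ uIcc (0:ℝ) 1 := Icc_subset_uIcc (Ioc_subset_Icc_self ht)
  rw [hc t ht,
    intervalIntegral.integral_add (hpow t) (hprim.mono_set (uIcc_subset_uIcc_left ht')),
    intervalIntegral.integral_const_mul, integral_rpow (Or.inl (by linarith)),
    Real.zero_rpow (by linarith), neg_add_eq_sub]
  simp only [particularSolution]
  ring

end WeightedPrimitive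

/-- structure of solutions of `y'' + (s/t) y' = h` on `(0,1]` for `s ∈ (-1,0)`
and bounded `h`: `y(t) = c₁ t^{1-s} + c₂ + f(t)` with `|f(t)| ≤ C C₀ t²`, `C = C(s)`. -/
theorem statement18 (s : ℝ) (hs : s ∈ Ioo (-1:ℝ) 0) :
    ∃ C > 0, ∀ C₀ : ℝ, 0 < C₀ → ∀ h y y' y'' : ℝ → ℝ,
      ContinuousOn h (Ioc (0:ℝ) 1) →
      (∀ t ∈ Ioc (0:ℝ) 1, |h t| ≤ C₀) →
      (∀ t ∈ Ioc (0:ℝ) 1, HasDerivWithinAt y (y' t) (Ioc (0:ℝ) 1) t) →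
      (∀ t ∈ Ioc (0:ℝ) 1, HasDerivWithinAt y' (y'' t) (Ioc (0:ℝ) 1) t) →
      ContinuousOn y'' (Ioc (0:ℝ) 1) →
      (∀ t ∈ Ioc (0:ℝ) 1, y'' t + (s / t) * y' t = h t) →
      ∃ (c₁ c₂ : ℝ) (f : ℝ → ℝ),
        (∀ t ∈ Ioc (0:ℝ) 1, |f t| ≤ C * C₀ * t ^ 2) ∧
        ∀ t ∈ Ioc (0:ℝ) 1, y t = c₁ * t ^ (1 - s) + c₂ + f t := by
  obtain ⟨hs1, hs0⟩ := hs
  have hs1' : 0 < s + 1 := by linarith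
  refine ⟨1 / (2 * (s + 1)), by positivity, ?_⟩
  intro C₀ _ h y y' y'' hcont hbound hy hy' _ hode
  obtain ⟨A, hA⟩ := exists_eq_rpow_neg_mul_of_ode hs1 hcont hbound hy' hode
  obtain ⟨c, hc⟩ := exists_eq_rpow_add_particularSolution hs1 (by linarith) hcont hbound
    fun t ht => hA t ht ▸ hy t ht
  exact ⟨A / (1 - s), c, particularSolution s h,
    fun t ht => abs_particularSolution_le hs1 hbound ht, hc⟩
end
end
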